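/- arXiv:1705.08352 — 3 statements merged into one kernel-verified Lean document; each statement's English description precedes it below -/
import Mathlib

section
/- Let f be a solution of H_∇ f = μ f ρ_{s,∇} on a connected open neighborhood U of P in ℝ^m (with smooth torsion-free Christoffel symbols and any μ ∈ ℝ). If f(P) = 0 and df(P) = 0, then f vanishes identically on a neighborhood of P. -/
/-- Partial derivative in the `i`-th coordinate direction. -/
noncomputable def pd {n : ℕ} (i : Fin n) (f : (Fin n → ℝ) → ℝ) : (Fin n → ℝ) → ℝ :=
  fun x => fderiv ℝ f x (Pi.single i 1)

/-- Affine Hessian: `(H_∇ f)ᵢⱼ = ∂ᵢ∂ⱼ f - Γᵢⱼᵏ ∂ₖ f`. -/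
noncomputable def affHess {n : ℕ} (Γ : Fin n → Fin n → Fin n → (Fin n → ℝ) → ℝ)
    (f : (Fin n → ℝ) → ℝ) (i j : Fin n) : (Fin n → ℝ) → ℝ :=
  fun x => pd i (pd j f) x - ∑ k, Γ i j k x * pd k f x

/-- Coordinate Ricci tensor
`ρⱼₖ = ∂ᵢΓⱼₖⁱ - ∂ⱼΓᵢₖⁱ + ΓᵢₗⁱΓⱼₖˡ - ΓⱼₗⁱΓᵢₖˡ` (sums over `i`, `l`). -/
noncomputable def ricci {n : ℕ} (Γ : Fin n → Fin n → Fin n → (Fin n → ℝ) → ℝ)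
    (j k : Fin n) : (Fin n → ℝ) → ℝ :=
  fun x => ∑ i, (pd i (Γ j k i) x - pd j (Γ i k i) x
    + ∑ l, (Γ i l i x * Γ j k l x - Γ j l i x * Γ i k l x))

/-- Symmetrized Ricci tensor. -/
noncomputable def ricciS {n : ℕ} (Γ : Fin n → Fin n → Fin n → (Fin n → ℝ) → ℝ)
    (j k : Fin n) : (Fin n → ℝ) → ℝ :=
  fun x => (ricci Γ j k x + ricci Γ k j x) / 2

lemma clm_eval {m : ℕ} (L : (Fin m → ℝ) →L[ℝ] ℝ) (v : Fin m → ℝ) :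
    L v = ∑ i, v i * L (Pi.single i 1) := by
  conv_lhs => rw [← Finset.univ_sum_single v]
  rw [map_sum]
  congr 1; ext i
  have h : Pi.single i (v i) = v i • (Pi.single i 1 : Fin m → ℝ) := by
    rw [← Pi.single_smul, smul_eq_mul, mul_one]
  rw [h, map_smul, smul_eq_mul]

lemma pd_contDiff {m : ℕ} {k : ℕ∞} (i : Fin m) (g : (Fin m → ℝ) → ℝ)
    (hg : ContDiff ℝ (k+1) g) : ContDiff ℝ k (pd i g) := by
  have h1 : ContDiff ℝ k (fderiv ℝ g) := hg.fderiv_right le_rfl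
  exact (ContinuousLinearMap.apply ℝ ℝ (Pi.single i 1 : Fin m → ℝ)).contDiff.comp h1

lemma pd_continuous {m : ℕ} (i : Fin m) (g : (Fin m → ℝ) → ℝ) (hg : ContDiff ℝ (⊤ : ℕ∞) g) :
    Continuous (pd i g) :=
  (pd_contDiff i g (hg.of_le (by simp) : ContDiff ℝ (0+1) g)).continuous


/-- a C² solution of H_∇ f = μ f ρ_{s,∇} on a connected open neighborhood
of P with f(P) = 0 and df(P) = 0 vanishes identically near P. -/
theorem stmt6 (m : ℕ) (hm : 1 ≤ m) (U : Set (Fin m → ℝ)) (hU : IsOpen U)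
    (hUconn : IsConnected U) (P : Fin m → ℝ) (hP : P ∈ U)
    (Γ : Fin m → Fin m → Fin m → (Fin m → ℝ) → ℝ)
    (hΓ : ∀ i j k, ContDiff ℝ (⊤ : ℕ∞) (Γ i j k))
    (hsym : ∀ i j k, Γ i j k = Γ j i k)
    (μ : ℝ) (f : (Fin m → ℝ) → ℝ) (hf : ContDiff ℝ 2 f)
    (hsol : ∀ x ∈ U, ∀ i j : Fin m, affHess Γ f i j x = μ * f x * ricciS Γ i j x)
    (h0 : f P = 0) (h1 : fderiv ℝ f P = 0) :
    ∀ᶠ x in nhds P, f x = 0 := by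
  obtain ⟨r, hr0, hrU⟩ : ∃ r > 0, Metric.closedBall P r ⊆ U :=
    Metric.nhds_basis_closedBall.mem_iff.mp (hU.mem_nhds hP)
  have hΓc : ∀ i j k, Continuous (Γ i j k) := fun i j k => (hΓ i j k).continuous
  have hricci : ∀ j k, Continuous (ricci Γ j k) := by
    intro j k
    unfold ricci
    apply continuous_finset_sum; intro i _
    apply Continuous.add
    · exact (pd_continuous _ _ (hΓ j k i)).sub (pd_continuous _ _ (hΓ i k i))
    · apply continuous_finset_sum; intro l _
      exact ((hΓc i l i).mul (hΓc j k l)).sub ((hΓc j l i).mul (hΓc i k l))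
  have hricciS : ∀ j k, Continuous (ricciS Γ j k) := fun j k =>
    ((hricci j k).add (hricci k j)).div_const 2
  set Q := Metric.closedBall P r with hQ
  have hQc : IsCompact Q := isCompact_closedBall P r
  set Φ : (Fin m → ℝ) → ((Fin m × Fin m × Fin m) → ℝ) × ((Fin m × Fin m) → ℝ) :=
    fun x => ((fun p => Γ p.1 p.2.1 p.2.2 x), (fun p => ricciS Γ p.1 p.2 x)) with hΦdef
  have hΦ : Continuous Φ :=
    (continuous_pi fun p => hΓc _ _ _).prodMk (continuous_pi fun p => hricciS _ _)
  obtain ⟨C, hC⟩ := hQc.exists_bound_of_continuousOn hΦ.continuousOn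
  have hC0 : 0 ≤ C := le_trans (norm_nonneg _) (hC P (Metric.mem_closedBall_self hr0.le))
  have hΓb : ∀ x ∈ Q, ∀ i j k, |Γ i j k x| ≤ C := by
    intro x hx i j k
    calc |Γ i j k x| = ‖(Φ x).1 (i,j,k)‖ := rfl
    _ ≤ ‖(Φ x).1‖ := norm_le_pi_norm _ _
    _ ≤ ‖Φ x‖ := norm_fst_le _
    _ ≤ C := hC x hx
  have hρb : ∀ x ∈ Q, ∀ i j, |ricciS Γ i j x| ≤ C := by
    intro x hx i j
    calc |ricciS Γ i j x| = ‖(Φ x).2 (i,j)‖ := rfl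
    _ ≤ ‖(Φ x).2‖ := norm_le_pi_norm _ _
    _ ≤ ‖Φ x‖ := norm_snd_le _
    _ ≤ C := hC x hx
  set K : ℝ := (m : ℝ) * r * ((m : ℝ) * C + |μ| * C + 1) with hK
  have hfd : Differentiable ℝ f := hf.differentiable two_ne_zero
  have hg1 : ∀ k, ContDiff ℝ 1 (pd k f) := fun k =>
    pd_contDiff k f (hf.of_le (by norm_num) : ContDiff ℝ ((1:ℕ∞)+1) f)
  have hgd : ∀ k, Differentiable ℝ (pd k f) := fun k => (hg1 k).differentiable one_ne_zero
  have key : ∀ x ∈ Metric.ball P r, f x = 0 := by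
    intro x hx
    set v : Fin m → ℝ := x - P with hv
    have hvr : ‖v‖ < r := by
      rw [hv, ← dist_eq_norm]; exact Metric.mem_ball.mp hx
    set γ : ℝ → (Fin m → ℝ) := fun t => P + t • v with hγ
    have hγc : Continuous γ := by
      rw [hγ]; exact continuous_const.add (continuous_id.smul continuous_const)
    have hγQ : ∀ t ∈ Set.Icc (0:ℝ) 1, γ t ∈ Q := by
      intro t ht
      rw [hQ, Metric.mem_closedBall, dist_eq_norm, hγ]
      have : P + t • v - P = t • v := by abel
      rw [this, norm_smul, Real.norm_eq_abs, abs_of_nonneg ht.1]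
      calc t * ‖v‖ ≤ 1 * ‖v‖ := by
            apply mul_le_mul_of_nonneg_right ht.2 (norm_nonneg _)
      _ ≤ r := by rw [one_mul]; exact hvr.le
    have hγU : ∀ t ∈ Set.Icc (0:ℝ) 1, γ t ∈ U := fun t ht => hrU (hγQ t ht)
    have hγd : ∀ t : ℝ, HasDerivAt γ v t := by
      intro t
      rw [hγ]
      simpa using ((hasDerivAt_id t).smul_const v).const_add P
    set y : ℝ → ℝ × (Fin m → ℝ) := fun t => (f (γ t), fun k => pd k f (γ t)) with hy
    set w : ℝ → ℝ × (Fin m → ℝ) := fun t =>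
      ((∑ i, v i * pd i f (γ t)),
       fun k => ∑ i, v i * fderiv ℝ (pd k f) (γ t) (Pi.single i 1)) with hw
    have hyd : ∀ t : ℝ, HasDerivAt y (w t) t := by
      intro t
      rw [hy, hw]
      apply HasDerivAt.prodMk
      · have h := (hfd (γ t)).hasFDerivAt.comp_hasDerivAt t (hγd t)
        rw [clm_eval] at h
        exact h
      · rw [hasDerivAt_pi]
        intro k
        have h := ((hgd k) (γ t)).hasFDerivAt.comp_hasDerivAt t (hγd t)
        rw [clm_eval] at h
        exact h
    have hyc : ContinuousOn y (Set.Icc 0 1) := by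
      apply Continuous.continuousOn
      rw [hy]
      exact (hf.continuous.comp hγc).prodMk
        (continuous_pi fun k => ((hg1 k).continuous).comp hγc)
    have hy0 : y 0 = 0 := by
      have hγ0 : γ 0 = P := by rw [hγ]; simp
      rw [hy]; simp only [hγ0]
      refine Prod.ext ?_ ?_
      · simpa using h0
      · funext k
        show pd k f P = 0
        unfold pd
        rw [h1]
        rfl
    have bound : ∀ t ∈ Set.Ico (0:ℝ) 1, ‖w t‖ ≤ K * ‖y t‖ + 0 := by
      intro t ht
      rw [add_zero]
      have htI : t ∈ Set.Icc (0:ℝ) 1 := Set.Ico_subset_Icc_self ht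
      have hQt := hγQ t htI
      have hUt := hγU t htI
      have hB0 : 0 ≤ ‖y t‖ := norm_nonneg _
      have hab : |f (γ t)| ≤ ‖y t‖ := by
        have : |f (γ t)| = ‖(y t).1‖ := by simp [hy, Real.norm_eq_abs]
        rw [this]; exact norm_fst_le _
      have hbb : ∀ l, |pd l f (γ t)| ≤ ‖y t‖ := by
        intro l
        have h2 : |pd l f (γ t)| = ‖(y t).2 l‖ := by simp [hy, Real.norm_eq_abs]
        rw [h2]
        exact le_trans (norm_le_pi_norm _ l) (norm_snd_le _)
      have hvb : ∀ i, |v i| ≤ r := by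
        intro i
        have := norm_le_pi_norm v i
        rw [Real.norm_eq_abs] at this
        exact le_trans this hvr.le
      have hsecond : ∀ i k, fderiv ℝ (pd k f) (γ t) (Pi.single i 1)
          = ∑ l, Γ i k l (γ t) * pd l f (γ t) + μ * f (γ t) * ricciS Γ i k (γ t) := by
        intro i k
        have h := hsol (γ t) hUt i k
        unfold affHess at h
        have h' : pd i (pd k f) (γ t)
            = ∑ l, Γ i k l (γ t) * pd l f (γ t) + μ * f (γ t) * ricciS Γ i k (γ t) := by
          linarith [h]
        exact h'
      have h1b : |∑ i, v i * pd i f (γ t)| ≤ (m:ℝ) * r * ‖y t‖ := by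
        calc |∑ i, v i * pd i f (γ t)| ≤ ∑ i, |v i * pd i f (γ t)| :=
              Finset.abs_sum_le_sum_abs _ _
        _ ≤ ∑ _i : Fin m, r * ‖y t‖ := by
              apply Finset.sum_le_sum
              intro i _
              rw [abs_mul]
              exact mul_le_mul (hvb i) (hbb i) (abs_nonneg _) hr0.le
        _ = (m:ℝ) * r * ‖y t‖ := by
              rw [Finset.sum_const, Finset.card_univ, Fintype.card_fin, nsmul_eq_mul]; ring
      have h2b : ∀ k, |∑ i, v i * fderiv ℝ (pd k f) (γ t) (Pi.single i 1)|
          ≤ (m:ℝ) * r * (((m:ℝ) * C + |μ| * C) * ‖y t‖) := by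
        intro k
        calc |∑ i, v i * fderiv ℝ (pd k f) (γ t) (Pi.single i 1)|
            ≤ ∑ i, |v i * fderiv ℝ (pd k f) (γ t) (Pi.single i 1)| :=
              Finset.abs_sum_le_sum_abs _ _
        _ ≤ ∑ _i : Fin m, r * (((m:ℝ) * C + |μ| * C) * ‖y t‖) := by
              apply Finset.sum_le_sum
              intro i _
              rw [abs_mul, hsecond i k]
              apply mul_le_mul (hvb i) ?_ (abs_nonneg _) hr0.le
              calc |∑ l, Γ i k l (γ t) * pd l f (γ t) + μ * f (γ t) * ricciS Γ i k (γ t)|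
                  ≤ |∑ l, Γ i k l (γ t) * pd l f (γ t)| + |μ * f (γ t) * ricciS Γ i k (γ t)| :=
                    abs_add_le _ _
              _ ≤ (m:ℝ) * (C * ‖y t‖) + |μ| * ‖y t‖ * C := by
                    apply add_le_add
                    · calc |∑ l, Γ i k l (γ t) * pd l f (γ t)|
                          ≤ ∑ l, |Γ i k l (γ t) * pd l f (γ t)| :=
                            Finset.abs_sum_le_sum_abs _ _
                      _ ≤ ∑ _l : Fin m, C * ‖y t‖ := by
                            apply Finset.sum_le_sum
                            intro l _
                            rw [abs_mul]
                            exact mul_le_mul (hΓb _ hQt i k l) (hbb l) (abs_nonneg _) hC0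
                      _ = (m:ℝ) * (C * ‖y t‖) := by
                            rw [Finset.sum_const, Finset.card_univ, Fintype.card_fin,
                              nsmul_eq_mul]
                    · rw [abs_mul, abs_mul]
                      apply mul_le_mul ?_ (hρb _ hQt i k) (abs_nonneg _)
                        (by positivity)
                      exact mul_le_mul_of_nonneg_left hab (abs_nonneg μ)
              _ = ((m:ℝ) * C + |μ| * C) * ‖y t‖ := by ring
        _ = (m:ℝ) * r * (((m:ℝ) * C + |μ| * C) * ‖y t‖) := by
              rw [Finset.sum_const, Finset.card_univ, Fintype.card_fin, nsmul_eq_mul]; ring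
      have hfac : ((m:ℝ) * C + |μ| * C) ≤ (m:ℝ) * C + |μ| * C + 1 := by linarith
      have hmr0 : 0 ≤ (m:ℝ) * r := by positivity
      rw [Prod.norm_def]
      apply max_le
      · rw [hw, Real.norm_eq_abs]
        calc |∑ i, v i * pd i f (γ t)| ≤ (m:ℝ) * r * ‖y t‖ := h1b
        _ ≤ K * ‖y t‖ := by
              rw [hK]
              nlinarith [mul_nonneg hmr0 hB0, mul_nonneg (mul_nonneg hmr0 hB0)
                (add_nonneg (mul_nonneg (Nat.cast_nonneg m) hC0)
                  (mul_nonneg (abs_nonneg μ) hC0))]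
      · rw [hw]
        apply pi_norm_le_iff_of_nonneg (by positivity : (0:ℝ) ≤ K * ‖y t‖) |>.mpr
        intro k
        rw [Real.norm_eq_abs]
        calc |∑ i, v i * fderiv ℝ (pd k f) (γ t) (Pi.single i 1)|
            ≤ (m:ℝ) * r * (((m:ℝ) * C + |μ| * C) * ‖y t‖) := h2b k
        _ ≤ K * ‖y t‖ := by
              rw [hK]
              nlinarith [mul_nonneg hmr0 hB0, mul_nonneg (mul_nonneg hmr0 hB0)
                (add_nonneg (mul_nonneg (Nat.cast_nonneg m) hC0)
                  (mul_nonneg (abs_nonneg μ) hC0))]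
    have hgron := norm_le_gronwallBound_of_norm_deriv_right_le (δ := 0) (K := K) (ε := 0)
      hyc (fun t ht => (hyd t).hasDerivWithinAt) (by rw [hy0]; simp) bound
    have hy1 : ‖y 1‖ ≤ 0 := by
      have := hgron 1 (Set.mem_Icc.mpr ⟨zero_le_one, le_rfl⟩)
      rwa [gronwallBound_ε0_δ0] at this
    have hy1z : y 1 = 0 := norm_le_zero_iff.mp hy1
    have hγ1 : γ 1 = x := by rw [hγ]; simp [hv]
    have : f (γ 1) = 0 := congrArg Prod.fst hy1z
    rwa [hγ1] at this
  filter_upwards [Metric.ball_mem_nhds P hr0] with x hx using key x hx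
end

section
/- Let E(P,μ,∇) be the space of germs at P of C² solutions of H_∇ f = μ f ρ_{s,∇} for a smooth torsion-free connection on an open subset of ℝ^m. Then dim E(P,μ,∇) ≤ m + 1. -/
lemma contDiff_pd {n N : ℕ} {f : (Fin n → ℝ) → ℝ} (hf : ContDiff ℝ (N + 1) f)
    (i : Fin n) : ContDiff ℝ N (pd i f) := by
  have h1 : ContDiff ℝ N (fderiv ℝ f) := hf.fderiv_right (by norm_cast)
  exact (ContinuousLinearMap.apply ℝ ℝ (Pi.single i 1 : Fin n → ℝ)).contDiff.comp h1

lemma contDiff_pd_of_top {n N : ℕ} {f : (Fin n → ℝ) → ℝ} (hf : ContDiff ℝ (⊤ : ℕ∞) f)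
    (i : Fin n) : ContDiff ℝ N (pd i f) :=
  contDiff_pd (hf.of_le (by exact_mod_cast le_top)) i

lemma fderiv_apply_eq_sum {n : ℕ} {f : (Fin n → ℝ) → ℝ} {x : Fin n → ℝ}
    (hf : DifferentiableAt ℝ f x) (v : Fin n → ℝ) :
    fderiv ℝ f x v = ∑ i, v i * pd i f x := by
  have hv : v = ∑ i, v i • (Pi.single i 1 : Fin n → ℝ) := by
    ext j; simp [Pi.single_apply]
  conv_lhs => rw [hv]
  rw [map_sum]
  simp [pd, smul_eq_mul]

lemma hasDerivAt_comp_line {n : ℕ} {f : (Fin n → ℝ) → ℝ} (P v : Fin n → ℝ) (t : ℝ)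
    (hf : DifferentiableAt ℝ f (P + t • v)) :
    HasDerivAt (fun s : ℝ => f (P + s • v)) (∑ i, v i * pd i f (P + t • v)) t := by
  have hline : HasDerivAt (fun s : ℝ => P + s • v) v t := by
    simpa using ((hasDerivAt_id t).smul_const v).const_add P
  have := hf.hasFDerivAt.comp_hasDerivAt t hline
  simpa [fderiv_apply_eq_sum hf v, Function.comp_def] using this

lemma continuous_ricci {n : ℕ} {Γ : Fin n → Fin n → Fin n → (Fin n → ℝ) → ℝ}
    (hΓ : ∀ i j k, ContDiff ℝ (⊤ : ℕ∞) (Γ i j k)) (j k : Fin n) :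
    Continuous (ricci Γ j k) := by
  have hc : ∀ a b c, Continuous (Γ a b c) := fun a b c => (hΓ a b c).continuous
  have hpd : ∀ (i : Fin n) a b c, Continuous (pd i (Γ a b c)) := fun i a b c =>
    (contDiff_pd_of_top (N := 0) (hΓ a b c) i).continuous
  unfold ricci
  apply continuous_finset_sum; intro i _
  exact (((hpd i j k i).sub (hpd j i k i)).add
    (continuous_finset_sum _ fun l _ =>
      ((hc i l i).mul (hc j k l)).sub ((hc j l i).mul (hc i k l))))

lemma continuous_ricciS {n : ℕ} {Γ : Fin n → Fin n → Fin n → (Fin n → ℝ) → ℝ}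
    (hΓ : ∀ i j k, ContDiff ℝ (⊤ : ℕ∞) (Γ i j k)) (j k : Fin n) :
    Continuous (ricciS Γ j k) :=
  ((continuous_ricci hΓ j k).add (continuous_ricci hΓ k j)).div_const 2

lemma pd_sum {n N : ℕ} (c : Fin N → ℝ) (f : Fin N → (Fin n → ℝ) → ℝ)
    (hf : ∀ a, Differentiable ℝ (f a)) (k : Fin n) (x : Fin n → ℝ) :
    pd k (fun y => ∑ a, c a * f a y) x = ∑ a, c a * pd k (f a) x := by
  unfold pd
  rw [fderiv_fun_sum (fun a _ => ((hf a x).const_mul (c a)))]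
  rw [ContinuousLinearMap.sum_apply]
  congr 1; ext a
  rw [fderiv_const_mul (hf a x) (c a)]
  simp

lemma vanish_of_zero_jet {m : ℕ} {U : Set (Fin m → ℝ)} (hU : IsOpen U)
    {P : Fin m → ℝ} (hP : P ∈ U)
    {Γ : Fin m → Fin m → Fin m → (Fin m → ℝ) → ℝ}
    (hΓ : ∀ i j k, ContDiff ℝ (⊤ : ℕ∞) (Γ i j k)) (μ : ℝ)
    {g : (Fin m → ℝ) → ℝ} (hg : ContDiff ℝ 2 g)
    (hsol : ∀ x ∈ U, ∀ i j : Fin m, affHess Γ g i j x = μ * g x * ricciS Γ i j x)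
    (h0 : g P = 0) (h1 : ∀ k, pd k g P = 0) :
    ∀ᶠ x in nhds P, g x = 0 := by
  -- choose a closed ball inside U
  obtain ⟨δ, δpos, hδ⟩ := Metric.isOpen_iff.mp hU P hP
  set ε : ℝ := δ / 2 with hε
  have εpos : 0 < ε := by positivity
  have hK₀U : Metric.closedBall P ε ⊆ U :=
    (Metric.closedBall_subset_ball (by linarith)).trans hδ
  -- uniform bounds on Γ and μ·ricciS on the closed ball
  set S : (Fin m → ℝ) → ℝ :=
    fun x => ∑ i, ∑ k, (|μ| * |ricciS Γ i k x| + ∑ l, |Γ i k l x|) with hS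
  have hScont : Continuous S := by
    apply continuous_finset_sum; intro i _
    apply continuous_finset_sum; intro k _
    exact ((continuous_const.mul (continuous_ricciS hΓ i k).abs).add
      (continuous_finset_sum _ fun l _ => (hΓ i k l).continuous.abs))
  obtain ⟨C, hC⟩ := (isCompact_closedBall P ε).exists_bound_of_continuousOn
    hScont.continuousOn
  set C0 : ℝ := max C 0 with hC0def
  have hC0 : 0 ≤ C0 := le_max_right _ _
  have hterm : ∀ x ∈ Metric.closedBall P ε, ∀ i k : Fin m,
      |μ| * |ricciS Γ i k x| + ∑ l, |Γ i k l x| ≤ C0 := by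
    intro x hx i k
    calc |μ| * |ricciS Γ i k x| + ∑ l, |Γ i k l x|
        ≤ ∑ k', (|μ| * |ricciS Γ i k' x| + ∑ l, |Γ i k' l x|) :=
          Finset.single_le_sum (f := fun k' => |μ| * |ricciS Γ i k' x| + ∑ l, |Γ i k' l x|)
            (fun k' _ => by positivity) (Finset.mem_univ k)
      _ ≤ S x := Finset.single_le_sum
          (f := fun i' => ∑ k', (|μ| * |ricciS Γ i' k' x| + ∑ l, |Γ i' k' l x|))
          (fun i' _ => Finset.sum_nonneg fun k' _ => by positivity) (Finset.mem_univ i)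
      _ ≤ |S x| := le_abs_self _
      _ ≤ C := by simpa using hC x hx
      _ ≤ C0 := le_max_left _ _
  have hρbound : ∀ x ∈ Metric.closedBall P ε, ∀ i k : Fin m,
      |μ| * |ricciS Γ i k x| ≤ C0 := by
    intro x hx i k
    have := hterm x hx i k
    have h2 : 0 ≤ ∑ l, |Γ i k l x| := Finset.sum_nonneg fun l _ => abs_nonneg _
    linarith
  have hΓbound : ∀ x ∈ Metric.closedBall P ε, ∀ i k l : Fin m,
      |Γ i k l x| ≤ C0 := by
    intro x hx i k l
    have h2 : |Γ i k l x| ≤ ∑ l', |Γ i k l' x| :=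
      Finset.single_le_sum (f := fun l' => |Γ i k l' x|) (fun l' _ => abs_nonneg _)
        (Finset.mem_univ l)
    have := hterm x hx i k
    have h3 : 0 ≤ |μ| * |ricciS Γ i k x| := by positivity
    linarith
  -- it suffices to prove vanishing on the open ball
  refine Filter.eventually_of_mem (Metric.ball_mem_nhds P εpos) ?_
  intro y hy
  set v : Fin m → ℝ := y - P with hvdef
  have hv : ‖v‖ < ε := by
    rw [hvdef]; rw [← dist_eq_norm]; exact Metric.mem_ball.mp hy
  set γ : ℝ → (Fin m → ℝ) := fun t => P + t • v with hγdef
  have hγcont : Continuous γ := by fun_prop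
  set χ : ℝ → ℝ := fun t => max 0 (min t 1) with hχdef
  have hχmem : ∀ t, χ t ∈ Set.Icc (0:ℝ) 1 :=
    fun t => ⟨le_max_left _ _, max_le (by norm_num) (min_le_right _ _)⟩
  have hχeq : ∀ t ∈ Set.Icc (0:ℝ) 1, χ t = t := by
    intro t ht
    simp only [hχdef]
    rw [min_eq_left ht.2, max_eq_right ht.1]
  have hγK : ∀ t ∈ Set.Icc (0:ℝ) 1, γ t ∈ Metric.closedBall P ε := by
    intro t ht
    rw [Metric.mem_closedBall, dist_eq_norm]
    have : γ t - P = t • v := by simp [hγdef]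
    rw [this, norm_smul]
    calc ‖t‖ * ‖v‖ ≤ 1 * ε := by
          apply mul_le_mul _ hv.le (norm_nonneg _) (by norm_num)
          rw [Real.norm_eq_abs, abs_le]; exact ⟨by linarith [ht.1], ht.2⟩
      _ = ε := one_mul ε
  have hγU : ∀ t ∈ Set.Icc (0:ℝ) 1, γ t ∈ U := fun t ht => hK₀U (hγK t ht)
  -- the ODE data
  set V : ℝ → ℝ × (Fin m → ℝ) → ℝ × (Fin m → ℝ) := fun t p =>
    (∑ i, v i * p.2 i,
     fun k => ∑ i, v i * ((∑ l, Γ i k l (γ (χ t)) * p.2 l)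
       + μ * p.1 * ricciS Γ i k (γ (χ t)))) with hVdef
  set F : ℝ → ℝ × (Fin m → ℝ) := fun t => (g (γ t), fun k => pd k g (γ t)) with hFdef
  set Kr : ℝ := (m : ℝ) * ε * ((m + 1) * (C0 + 1)) with hKrdef
  have hKr0 : 0 ≤ Kr := by positivity
  -- Lipschitz bound
  have hlip : ∀ t, LipschitzWith (Real.toNNReal Kr) (V t) := by
    intro t
    apply LipschitzWith.of_dist_le_mul
    intro p q
    rw [Real.coe_toNNReal _ hKr0]
    have hxK : γ (χ t) ∈ Metric.closedBall P ε := hγK _ (hχmem t)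
    set D : ℝ := dist p q with hDdef
    have hD : 0 ≤ D := dist_nonneg
    have h1' : |p.1 - q.1| ≤ D := by
      rw [← Real.dist_eq]
      calc dist p.1 q.1 ≤ max (dist p.1 q.1) (dist p.2 q.2) := le_max_left _ _
        _ = D := (Prod.dist_eq).symm
    have h2' : ∀ l, |p.2 l - q.2 l| ≤ D := by
      intro l
      rw [← Real.dist_eq]
      calc dist (p.2 l) (q.2 l) ≤ dist p.2 q.2 := dist_le_pi_dist p.2 q.2 l
        _ ≤ max (dist p.1 q.1) (dist p.2 q.2) := le_max_right _ _
        _ = D := (Prod.dist_eq).symm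
    have hvb : ∀ i, |v i| ≤ ε := by
      intro i
      calc |v i| = ‖v i‖ := rfl
        _ ≤ ‖v‖ := norm_le_pi_norm v i
        _ ≤ ε := hv.le
    have hone : (1:ℝ) ≤ (m + 1) * (C0 + 1) := by nlinarith [Nat.cast_nonneg (α := ℝ) m]
    rw [Prod.dist_eq]
    apply max_le
    · rw [Real.dist_eq]
      have hsub : (∑ i, v i * p.2 i) - (∑ i, v i * q.2 i)
          = ∑ i, v i * (p.2 i - q.2 i) := by
        rw [← Finset.sum_sub_distrib]; exact Finset.sum_congr rfl fun i _ => by ring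
      calc |(V t p).1 - (V t q).1| = |∑ i, v i * (p.2 i - q.2 i)| := by
            simp only [hVdef]; exact congrArg _ hsub
        _ ≤ ∑ i, |v i * (p.2 i - q.2 i)| := Finset.abs_sum_le_sum_abs _ _
        _ ≤ ∑ _i : Fin m, ε * D := Finset.sum_le_sum fun i _ => by
            rw [abs_mul]
            exact mul_le_mul (hvb i) (h2' i) (abs_nonneg _) εpos.le
        _ = (m : ℝ) * (ε * D) := by
            rw [Finset.sum_const, Finset.card_univ, Fintype.card_fin, nsmul_eq_mul]
        _ = ((m : ℝ) * ε * D) * 1 := by ring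
        _ ≤ ((m : ℝ) * ε * D) * ((m + 1) * (C0 + 1)) :=
            mul_le_mul_of_nonneg_left hone (by positivity)
        _ = Kr * D := by rw [hKrdef]; ring
    · rw [dist_pi_le_iff (by positivity)]
      intro k
      rw [Real.dist_eq]
      have hsub : (V t p).2 k - (V t q).2 k
          = ∑ i, v i * ((∑ l, Γ i k l (γ (χ t)) * (p.2 l - q.2 l))
              + μ * (p.1 - q.1) * ricciS Γ i k (γ (χ t))) := by
        simp only [hVdef]
        rw [← Finset.sum_sub_distrib]
        refine Finset.sum_congr rfl fun i _ => ?_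
        have e : ∑ l, Γ i k l (γ (χ t)) * (p.2 l - q.2 l)
            = (∑ l, Γ i k l (γ (χ t)) * p.2 l) - ∑ l, Γ i k l (γ (χ t)) * q.2 l := by
          rw [← Finset.sum_sub_distrib]
          exact Finset.sum_congr rfl fun l _ => mul_sub _ _ _
        rw [e]; ring
      calc |(V t p).2 k - (V t q).2 k|
          = |∑ i, v i * ((∑ l, Γ i k l (γ (χ t)) * (p.2 l - q.2 l))
              + μ * (p.1 - q.1) * ricciS Γ i k (γ (χ t)))| := by rw [hsub]
        _ ≤ ∑ i, |v i * ((∑ l, Γ i k l (γ (χ t)) * (p.2 l - q.2 l))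
              + μ * (p.1 - q.1) * ricciS Γ i k (γ (χ t)))| :=
            Finset.abs_sum_le_sum_abs _ _
        _ ≤ ∑ _i : Fin m, ε * ((m + 1) * (C0 + 1) * D) := by
            apply Finset.sum_le_sum
            intro i _
            rw [abs_mul]
            apply mul_le_mul (hvb i) _ (abs_nonneg _) εpos.le
            calc |(∑ l, Γ i k l (γ (χ t)) * (p.2 l - q.2 l))
                  + μ * (p.1 - q.1) * ricciS Γ i k (γ (χ t))|
                ≤ |∑ l, Γ i k l (γ (χ t)) * (p.2 l - q.2 l)|
                  + |μ * (p.1 - q.1) * ricciS Γ i k (γ (χ t))| := abs_add_le _ _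
              _ ≤ (∑ l, |Γ i k l (γ (χ t)) * (p.2 l - q.2 l)|)
                  + |μ * (p.1 - q.1) * ricciS Γ i k (γ (χ t))| := by
                  gcongr; exact Finset.abs_sum_le_sum_abs _ _
              _ ≤ (∑ _l : Fin m, C0 * D) + C0 * D := by
                  gcongr with l hl
                  · rw [abs_mul]
                    exact mul_le_mul (hΓbound _ hxK i k l) (h2' l) (abs_nonneg _) hC0
                  · have : |μ * (p.1 - q.1) * ricciS Γ i k (γ (χ t))|
                        = (|μ| * |ricciS Γ i k (γ (χ t))|) * |p.1 - q.1| := by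
                      rw [abs_mul, abs_mul]; ring
                    rw [this]
                    exact mul_le_mul (hρbound _ hxK i k) h1' (abs_nonneg _) hC0
              _ = (m : ℝ) * (C0 * D) + C0 * D := by
                  rw [Finset.sum_const, Finset.card_univ, Fintype.card_fin, nsmul_eq_mul]
              _ = ((m : ℝ) + 1) * C0 * D := by ring
              _ ≤ ((m : ℝ) + 1) * (C0 + 1) * D := by
                  apply mul_le_mul_of_nonneg_right _ hD
                  apply mul_le_mul_of_nonneg_left (by linarith) (by positivity)
              _ = (m + 1) * (C0 + 1) * D := by norm_num
        _ = (m : ℝ) * (ε * ((m + 1) * (C0 + 1) * D)) := by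
            rw [Finset.sum_const, Finset.card_univ, Fintype.card_fin, nsmul_eq_mul]
        _ = Kr * D := by rw [hKrdef]; ring
  -- differentiability facts
  have hgdiff : Differentiable ℝ g := hg.differentiable (by norm_num)
  have hpdg : ∀ k : Fin m, ContDiff ℝ 1 (pd k g) := fun k => contDiff_pd hg k
  have hpdgdiff : ∀ k : Fin m, Differentiable ℝ (pd k g) :=
    fun k => (hpdg k).differentiable (by norm_num)
  -- F solves the ODE on [0,1)
  have hFderiv : ∀ t ∈ Set.Ico (0:ℝ) 1, HasDerivAt F (V t (F t)) t := by
    intro t ht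
    have htI : t ∈ Set.Icc (0:ℝ) 1 := Set.Ico_subset_Icc_self ht
    have hxU : γ t ∈ U := hγU t htI
    have hχt : χ t = t := hχeq t htI
    apply HasDerivAt.prodMk
    · have := hasDerivAt_comp_line P v t (hgdiff (P + t • v))
      simpa [hFdef, hVdef, hγdef] using this
    · rw [hasDerivAt_pi]
      intro k
      have hD := hasDerivAt_comp_line P v t (hpdgdiff k (P + t • v))
      have heq : (∑ i, v i * (∑ l, Γ i k l (γ (χ t)) * (F t).2 l
            + μ * (F t).1 * ricciS Γ i k (γ (χ t))))
          = ∑ i, v i * pd i (pd k g) (γ t) := by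
        simp only [hFdef]
        rw [hχt]
        refine Finset.sum_congr rfl fun i _ => ?_
        congr 1
        have hpde := hsol (γ t) hxU i k
        unfold affHess at hpde
        linarith [hpde]
      rw [heq]
      exact hD
  -- continuity of F
  have hFcont : Continuous F := by
    apply Continuous.prodMk
    · exact hg.continuous.comp hγcont
    · exact continuous_pi fun k => (hpdg k).continuous.comp hγcont
  -- the zero solution
  set Z : ℝ → ℝ × (Fin m → ℝ) := fun _ => (0, 0) with hZdef
  have hV0 : ∀ t, V t (Z t) = (0, (0 : Fin m → ℝ)) := by
    intro t
    rw [Prod.ext_iff]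
    refine ⟨by simp [hVdef, hZdef], ?_⟩
    funext k
    simp [hVdef, hZdef]
  have hZderiv : ∀ t ∈ Set.Ico (0:ℝ) 1, HasDerivWithinAt Z (V t (Z t)) (Set.Ici t) t := by
    intro t _
    rw [hV0]
    exact (hasDerivAt_const t _).hasDerivWithinAt
  have h00 : F 0 = Z 0 := by
    have hγ0 : γ 0 = P := by simp [hγdef]
    rw [Prod.ext_iff]
    constructor
    · show g (γ 0) = (0:ℝ)
      rw [hγ0, h0]
    · show (fun k => pd k g (γ 0)) = (0 : Fin m → ℝ)
      funext k
      rw [hγ0]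
      simpa using h1 k
  have heq := ODE_solution_unique hlip hFcont.continuousOn
    (fun t ht => (hFderiv t ht).hasDerivWithinAt)
    continuous_const.continuousOn hZderiv h00
  have hF1 := heq (Set.right_mem_Icc.mpr (by norm_num : (0:ℝ) ≤ 1))
  have : g (γ 1) = 0 := congrArg Prod.fst hF1
  have hγ1 : γ 1 = y := by
    rw [hγdef]
    simp [hvdef]
  rwa [hγ1] at this

/-- dim E(P,μ,∇) ≤ m+1, i.e. any m+2 germs of C² solutions of the affine
quasi-Einstein equation at P are linearly dependent as germs. -/
theorem stmt7 (m : ℕ) (hm : 1 ≤ m) (U : Set (Fin m → ℝ)) (hU : IsOpen U)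
    (P : Fin m → ℝ) (hP : P ∈ U)
    (Γ : Fin m → Fin m → Fin m → (Fin m → ℝ) → ℝ)
    (hΓ : ∀ i j k, ContDiff ℝ (⊤ : ℕ∞) (Γ i j k))
    (hsym : ∀ i j k, Γ i j k = Γ j i k)
    (μ : ℝ) (f : Fin (m + 2) → (Fin m → ℝ) → ℝ)
    (hf : ∀ a, ContDiff ℝ 2 (f a))
    (hsol : ∀ a, ∀ x ∈ U, ∀ i j : Fin m,
      affHess Γ (f a) i j x = μ * f a x * ricciS Γ i j x) :
    ∃ c : Fin (m + 2) → ℝ, c ≠ 0 ∧ ∀ᶠ x in nhds P, ∑ a, c a * f a x = 0 := by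
  set w : Fin (m + 2) → ℝ × (Fin m → ℝ) := fun a => (f a P, fun k => pd k (f a) P) with hw
  have hnli : ¬ LinearIndependent ℝ w := by
    intro hli
    have hcard := hli.fintype_card_le_finrank
    rw [Fintype.card_fin] at hcard
    have hfr : Module.finrank ℝ (ℝ × (Fin m → ℝ)) = 1 + m := by
      rw [Module.finrank_prod, Module.finrank_self, Module.finrank_pi]
      simp
    omega
  obtain ⟨c, hcsum, a0, ha0⟩ := Fintype.not_linearIndependent_iff.mp hnli
  refine ⟨c, fun h => ha0 (by rw [h]; rfl), ?_⟩
  have hdiff : ∀ a, Differentiable ℝ (f a) := fun a => (hf a).differentiable (by norm_num)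
  have hgC2 : ContDiff ℝ 2 (fun x => ∑ a, c a * f a x) :=
    ContDiff.sum fun a _ => contDiff_const.mul (hf a)
  have hpdsum : ∀ (j : Fin m) (x : Fin m → ℝ),
      pd j (fun y => ∑ a, c a * f a y) x = ∑ a, c a * pd j (f a) x :=
    fun j x => pd_sum c f hdiff j x
  have h0 : (∑ a, c a * f a P) = 0 := by
    have := congrArg Prod.fst hcsum
    simpa [hw, Prod.fst_sum, smul_eq_mul] using this
  have h1 : ∀ k : Fin m, pd k (fun y => ∑ a, c a * f a y) P = 0 := by
    intro k
    rw [hpdsum k P]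
    have := congrArg (fun p : ℝ × (Fin m → ℝ) => p.2 k) hcsum
    simpa [hw, Prod.snd_sum, smul_eq_mul] using this
  have hsolg : ∀ x ∈ U, ∀ i j : Fin m,
      affHess Γ (fun y => ∑ a, c a * f a y) i j x
        = μ * (∑ a, c a * f a x) * ricciS Γ i j x := by
    intro x hx i j
    have haff : ∀ a, pd i (pd j (f a)) x - ∑ k, Γ i j k x * pd k (f a) x
        = μ * f a x * ricciS Γ i j x := fun a => hsol a x hx i j
    unfold affHess
    have hpdj : pd j (fun y => ∑ a, c a * f a y) = fun y => ∑ a, c a * pd j (f a) y :=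
      funext fun y => pd_sum c f hdiff j y
    rw [hpdj]
    have hdiffpd : ∀ a, Differentiable ℝ (pd j (f a)) :=
      fun a => (contDiff_pd (hf a) j).differentiable (by norm_num)
    rw [pd_sum c (fun a => pd j (f a)) hdiffpd i x]
    have e1 : ∑ k, Γ i j k x * pd k (fun y => ∑ a, c a * f a y) x
        = ∑ a, c a * ∑ k, Γ i j k x * pd k (f a) x := by
      calc ∑ k, Γ i j k x * pd k (fun y => ∑ a, c a * f a y) x
          = ∑ k, ∑ a, c a * (Γ i j k x * pd k (f a) x) := by
            refine Finset.sum_congr rfl fun k _ => ?_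
            rw [hpdsum k x, Finset.mul_sum]
            exact Finset.sum_congr rfl fun a _ => by ring
        _ = ∑ a, ∑ k, c a * (Γ i j k x * pd k (f a) x) := Finset.sum_comm
        _ = ∑ a, c a * ∑ k, Γ i j k x * pd k (f a) x := by
            refine Finset.sum_congr rfl fun a _ => ?_
            rw [Finset.mul_sum]
    rw [e1, ← Finset.sum_sub_distrib]
    have e2 : μ * (∑ a, c a * f a x) * ricciS Γ i j x
        = ∑ a, c a * (μ * f a x * ricciS Γ i j x) := by
      rw [Finset.mul_sum, Finset.sum_mul]
      exact Finset.sum_congr rfl fun a _ => by ring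
    rw [e2]
    refine Finset.sum_congr rfl fun a _ => ?_
    rw [← mul_sub, haff a]
  have := vanish_of_zero_jet hU hP hΓ μ hgC2 hsolg h0 h1
  exact this
end

section
/- Let ∇̃ be the connection on an open subset of ℝ² whose only nonzero Christoffel symbols are Γ̃₁₁¹ = -∂₁φ and Γ̃₂₂² = ∂₂φ for a smooth function φ. If f is a smooth function with H_∇̃ f = 0 on a neighborhood of a point P and df(P) ≠ 0, then ∂₁∂₂φ(P) = 0. -/
open Filter Topology

section Helpers

/-- fderiv applied to a fixed vector, at eventually equal functions. -/
lemma pd_congr_nhds {n : ℕ} {i : Fin n} {u v : (Fin n → ℝ) → ℝ} {P : Fin n → ℝ}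
    (h : u =ᶠ[𝓝 P] v) : pd i u P = pd i v P := by
  unfold pd; rw [h.fderiv_eq]

lemma pd_const_zero {n : ℕ} (i : Fin n) (x : Fin n → ℝ) :
    pd i (fun _ => (0:ℝ)) x = 0 := by
  unfold pd; simp

lemma pd_mul {n : ℕ} (i : Fin n) {u v : (Fin n → ℝ) → ℝ} {x : Fin n → ℝ}
    (hu : DifferentiableAt ℝ u x) (hv : DifferentiableAt ℝ v x) :
    pd i (fun y => u y * v y) x = pd i u x * v x + u x * pd i v x := by
  unfold pd
  rw [fderiv_fun_mul hu hv]
  simp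
  ring

lemma pd_neg {n : ℕ} (i : Fin n) (u : (Fin n → ℝ) → ℝ) (x : Fin n → ℝ) :
    pd i (fun y => -(u y)) x = -(pd i u x) := by
  unfold pd
  rw [fderiv_fun_neg]
  simp

lemma pd_contDiff_s9 {n : ℕ} (i : Fin n) {u : (Fin n → ℝ) → ℝ} {m k : WithTop ℕ∞}
    (h : ContDiff ℝ k u) (hmk : m + 1 ≤ k) : ContDiff ℝ m (pd i u) :=
  (h.fderiv_right hmk).clm_apply contDiff_const

/-- A differentiable real function on ℝ² has derivative built from its partials. -/
lemma fderiv_eq_pd {u : (Fin 2 → ℝ) → ℝ} {x : Fin 2 → ℝ} (h : DifferentiableAt ℝ u x) :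
    fderiv ℝ u x = pd 0 u x • ContinuousLinearMap.proj (R := ℝ) (φ := fun _ : Fin 2 => ℝ) 0
      + pd 1 u x • ContinuousLinearMap.proj (R := ℝ) (φ := fun _ : Fin 2 => ℝ) 1 := by
  ext v
  have hv : v = v 0 • (Pi.single (0 : Fin 2) (1:ℝ) : Fin 2 → ℝ)
      + v 1 • (Pi.single (1 : Fin 2) (1:ℝ) : Fin 2 → ℝ) := by
    funext j; fin_cases j <;> simp
  conv_lhs => rw [hv]
  simp [pd, mul_comm]

/-- Symmetry of second partial derivatives for a `C²` function at a point. -/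
lemma pd_symm {u : (Fin 2 → ℝ) → ℝ} {P : Fin 2 → ℝ} (h : ContDiffAt ℝ 2 u P) (i j : Fin 2) :
    pd i (pd j u) P = pd j (pd i u) P := by
  have hd : DifferentiableAt ℝ (fderiv ℝ u) P :=
    (h.fderiv_right (m := 1) (by norm_num)).differentiableAt one_ne_zero
  have hsymm : IsSymmSndFDerivAt ℝ u P := h.isSymmSndFDerivAt (by simp)
  have key : ∀ a b : Fin 2, pd a (pd b u) P
      = fderiv ℝ (fderiv ℝ u) P (Pi.single a 1) (Pi.single b 1) := by
    intro a b
    show fderiv ℝ (fun x => fderiv ℝ u x (Pi.single b 1)) P (Pi.single a 1) = _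
    rw [fderiv_clm_apply hd (differentiableAt_const _)]
    simp
  rw [key, key]
  exact hsymm _ _


/-- If a `C¹` function on ℝ² has partials eventually equal to `C¹` functions near `P`,
it is `C²` at `P`. -/
lemma contDiffAt_two_of_partials {g : (Fin 2 → ℝ) → ℝ} {P : Fin 2 → ℝ} (hg : ContDiff ℝ 1 g)
    {a b : (Fin 2 → ℝ) → ℝ} (ha : ContDiffAt ℝ 1 a P) (hb : ContDiffAt ℝ 1 b P)
    (h0 : ∀ᶠ x in 𝓝 P, pd 0 g x = a x) (h1 : ∀ᶠ x in 𝓝 P, pd 1 g x = b x) :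
    ContDiffAt ℝ 2 g P := by
  have h2 : ContDiffAt ℝ ((1 : ℕ) + 1) g P := by
    rw [contDiffAt_succ_iff_hasFDerivAt]
    refine ⟨fun x => a x • ContinuousLinearMap.proj (R := ℝ) (φ := fun _ : Fin 2 => ℝ) 0
      + b x • ContinuousLinearMap.proj (R := ℝ) (φ := fun _ : Fin 2 => ℝ) 1, ?_, ?_⟩
    · obtain ⟨s, hs, hsub⟩ := Filter.eventually_iff_exists_mem.1 (h0.and h1)
      refine ⟨s, hs, fun x hx => ?_⟩
      have hd := hg.differentiable one_ne_zero x
      have hh := hd.hasFDerivAt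
      rwa [fderiv_eq_pd hd, (hsub x hx).1, (hsub x hx).2] at hh
    · exact (ha.smul contDiffAt_const).add (hb.smul contDiffAt_const)
  have : ((1 : ℕ) + 1 : WithTop ℕ∞) = 2 := by norm_num
  rwa [this] at h2

end Helpers

/-- for the connection on an open subset of ℝ² with only nonzero Christoffel
symbols Γ̃₁₁¹ = -∂₁φ, Γ̃₂₂² = ∂₂φ, a solution of H_∇̃ f = 0 near P with df(P) ≠ 0 forces
∂₁∂₂φ(P) = 0. -/
theorem stmt9 (φ : (Fin 2 → ℝ) → ℝ) (hφ : ContDiff ℝ (⊤ : ℕ∞) φ)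
    (Γt : Fin 2 → Fin 2 → Fin 2 → (Fin 2 → ℝ) → ℝ)
    (hΓt : Γt = fun i j k x =>
      if i = 0 ∧ j = 0 ∧ k = 0 then -(pd 0 φ x)
      else if i = 1 ∧ j = 1 ∧ k = 1 then pd 1 φ x
      else 0)
    (P : Fin 2 → ℝ) (f : (Fin 2 → ℝ) → ℝ) (hf : ContDiff ℝ 2 f)
    (hsol : ∀ᶠ x in nhds P, ∀ i j : Fin 2, affHess Γt f i j x = 0)
    (hdf : fderiv ℝ f P ≠ 0) :
    pd 0 (pd 1 φ) P = 0 := by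
  subst hΓt
  -- basic smoothness facts
  have hf1 : ∀ i : Fin 2, ContDiff ℝ 1 (pd i f) := fun i => pd_contDiff_s9 i hf (by norm_num)
  have hφ2 : ∀ i : Fin 2, ContDiff ℝ 2 (pd i φ) := fun i => pd_contDiff_s9 i hφ (WithTop.coe_le_coe.2 le_top)
  have hφC2 : ContDiffAt ℝ 2 φ P := (hφ.of_le (by exact WithTop.coe_le_coe.2 (le_top : (2:ℕ∞) ≤ ⊤))).contDiffAt
  -- the four PDEs near P
  have key : ∀ᶠ x in 𝓝 P,
      pd 0 (pd 0 f) x = -(pd 0 φ x * pd 0 f x) ∧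
      pd 0 (pd 1 f) x = 0 ∧ pd 1 (pd 0 f) x = 0 ∧
      pd 1 (pd 1 f) x = pd 1 φ x * pd 1 f x := by
    filter_upwards [hsol] with x hx
    have h00 := hx 0 0
    have h01 := hx 0 1
    have h10 := hx 1 0
    have h11 := hx 1 1
    simp only [affHess, Fin.sum_univ_two] at h00 h01 h10 h11
    norm_num at h00 h01 h10 h11
    refine ⟨by linarith, h01, h10, by linarith⟩
  have hE00 : (pd 0 (pd 0 f)) =ᶠ[𝓝 P] fun x => -(pd 0 φ x * pd 0 f x) :=
    key.mono fun x hx => hx.1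
  have hE01 : (pd 0 (pd 1 f)) =ᶠ[𝓝 P] fun _ => (0:ℝ) := key.mono fun x hx => hx.2.1
  have hE10 : (pd 1 (pd 0 f)) =ᶠ[𝓝 P] fun _ => (0:ℝ) := key.mono fun x hx => hx.2.2.1
  have hE11 : (pd 1 (pd 1 f)) =ᶠ[𝓝 P] fun x => pd 1 φ x * pd 1 f x :=
    key.mono fun x hx => hx.2.2.2
  -- the differential is nonzero, so one of the partials is nonzero at P
  have hcase : pd 0 f P ≠ 0 ∨ pd 1 f P ≠ 0 := by
    by_contra hc
    push_neg at hc
    apply hdf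
    rw [fderiv_eq_pd ((hf.differentiable (by norm_num)) P), hc.1, hc.2]
    simp
  rcases hcase with hP | hP
  · -- case ∂₀ f (P) ≠ 0 : work with g = pd 0 f
    have hC2 : ContDiffAt ℝ 2 (pd 0 f) P :=
      contDiffAt_two_of_partials (hf1 0)
        (((hφ2 0).contDiffAt.of_le (by norm_num)).mul ((hf1 0).contDiffAt)).neg
        contDiffAt_const hE00 hE10
    have step1 : pd 1 (pd 0 (pd 0 f)) P = -(pd 1 (pd 0 φ) P * pd 0 f P) := by
      rw [pd_congr_nhds hE00, pd_neg,
        pd_mul 1 (((hφ2 0).differentiable (by norm_num)) P) (((hf1 0).differentiable one_ne_zero) P),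
        hE10.self_of_nhds]
      ring
    have step2 : pd 1 (pd 0 (pd 0 f)) P = 0 := by
      rw [pd_symm hC2 1 0, pd_congr_nhds hE10, pd_const_zero]
    have hmix : pd 1 (pd 0 φ) P = 0 := by
      have := step1.symm.trans step2
      rw [neg_eq_zero, mul_eq_zero] at this
      rcases this with h | h
      · exact h
      · exact absurd h hP
    rw [pd_symm hφC2 0 1, hmix]
  · -- case ∂₁ f (P) ≠ 0 : work with h = pd 1 f
    have hC2 : ContDiffAt ℝ 2 (pd 1 f) P :=
      contDiffAt_two_of_partials (hf1 1) contDiffAt_const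
        (((hφ2 1).contDiffAt.of_le (by norm_num)).mul ((hf1 1).contDiffAt)) hE01 hE11
    have step1 : pd 0 (pd 1 (pd 1 f)) P = pd 0 (pd 1 φ) P * pd 1 f P := by
      rw [pd_congr_nhds hE11,
        pd_mul 0 (((hφ2 1).differentiable (by norm_num)) P) (((hf1 1).differentiable one_ne_zero) P),
        hE01.self_of_nhds]
      ring
    have step2 : pd 0 (pd 1 (pd 1 f)) P = 0 := by
      rw [pd_symm hC2 0 1, pd_congr_nhds hE01, pd_const_zero]
    have := step1.symm.trans step2
    rw [mul_eq_zero] at this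
    rcases this with h | h
    · exact h
    · exact absurd h hP
end
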